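/- The set { Y₁ + Y₂^Γ : Y₁, Y₂ ∈ M_m(ℂ) ⊗ M_n(ℂ) positive semidefinite } is a closed convex cone in the real vector space of Hermitian mn × mn matrices. -/

import Mathlib

open Matrix Complex Finset
open scoped ComplexOrder

def ptranspose {m n : ℕ} (ρ : Matrix (Fin m × Fin n) (Fin m × Fin n) ℂ) :
    Matrix (Fin m × Fin n) (Fin m × Fin n) ℂ :=
  fun a b => ρ (a.1, b.2) (b.1, a.2)

/-!
The set is the image of pairs of positive semidefinite matrices under `(Y₁, Y₂) ↦ Y₁ + Y₂^Γ`.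
Since `Γ` preserves the trace and positive semidefinite matrices have nonnegative trace,
`Re tr Y ≤ C` forces `Re tr Yᵢ ≤ C` for both summands; as the entries of a positive semidefinite
matrix are bounded by its trace (its `2 × 2` principal minors are nonnegative), the pairs mapped
into a trace sublevel set form a compact set. A limit point `Y` of the image lies in the image of
the compact set for the level `Re tr Y + 1`, hence in the image. Convexity and the cone property
follow from linearity of `Γ`, hermiticity from `Γ` preserving it.
-/

open ComplexConjugate

theorem isClosed_image_of_isCompact_sublevel {X Y : Type*} [TopologicalSpace X]
    [TopologicalSpace Y] [T2Space Y] {K : Set X} {f : X → Y} (hf : ContinuousOn f K) {φ : Y → ℝ}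
    (hφ : Continuous φ) (hK : ∀ C, IsCompact {x ∈ K | φ (f x) ≤ C}) : IsClosed (f '' K) := by
  refine isClosed_of_closure_subset fun y hy => ?_
  set C := φ y + 1
  have hU : IsOpen {z | φ z < C} := isOpen_lt hφ continuous_const
  have hyU : y ∈ {z | φ z < C} := by simp [C]
  have hsub : {z | φ z < C} ∩ f '' K ⊆ f '' {x ∈ K | φ (f x) ≤ C} := by
    rintro _ ⟨hz, x, hx, rfl⟩
    exact ⟨x, ⟨hx, hz.le⟩, rfl⟩
  have hy' := closure_mono hsub (hU.inter_closure ⟨hyU, hy⟩)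
  rw [((hK C).image_of_continuousOn (hf.mono fun _ hx => hx.1)).isClosed.closure_eq] at hy'
  exact Set.image_mono (fun x hx => hx.1) hy'

namespace Matrix

variable {k : Type*}

theorem PosSemidef.normSq_apply_le {A : Matrix k k ℂ} (hA : A.PosSemidef) (i j : k) :
    normSq (A i j) ≤ (A i i).re * (A j j).re := by
  classical
  have hdet := (hA.submatrix ![i, j]).det_nonneg
  have hji : A j i = conj (A i j) := (hA.isHermitian.apply j i).symm
  rw [det_fin_two] at hdet
  simp only [submatrix_apply, Matrix.cons_val_zero, Matrix.cons_val_one, hji] at hdet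
  have hi : (A i i).im = 0 := (le_def.mp hA.diag_nonneg).2.symm
  have hj : (A j j).im = 0 := (le_def.mp hA.diag_nonneg).2.symm
  simpa [hi, hj, normSq_apply] using (le_def.mp hdet).1

variable [Fintype k]

theorem PosSemidef.re_apply_le_re_trace {A : Matrix k k ℂ} (hA : A.PosSemidef) (i : k) :
    (A i i).re ≤ A.trace.re := by
  rw [trace, re_sum]
  exact single_le_sum (f := fun l => (A l l).re) (fun l _ => (le_def.mp hA.diag_nonneg).1)
    (mem_univ i)

theorem PosSemidef.norm_apply_le_re_trace {A : Matrix k k ℂ} (hA : A.PosSemidef) (i j : k) :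
    ‖A i j‖ ≤ A.trace.re := by
  have hij : ‖A i j‖ ^ 2 ≤ (A i i).re * (A j j).re :=
    normSq_eq_norm_sq (A i j) ▸ hA.normSq_apply_le i j
  have hi := hA.re_apply_le_re_trace i
  have hj := hA.re_apply_le_re_trace j
  have hi0 : 0 ≤ (A i i).re := (le_def.mp hA.diag_nonneg).1
  have hj0 : 0 ≤ (A j j).re := (le_def.mp hA.diag_nonneg).1
  nlinarith [norm_nonneg (A i j)]

theorem isClosed_setOf_posSemidef : IsClosed {A : Matrix k k ℂ | A.PosSemidef} := by
  simp_rw [posSemidef_iff_dotProduct_mulVec, Set.ofPred_and, Set.ofPred_forall]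
  exact (isClosed_eq continuous_id.matrix_conjTranspose continuous_id).inter
    (isClosed_iInter fun x => isClosed_le continuous_const
      (continuous_const.dotProduct (continuous_id.matrix_mulVec continuous_const)))

attribute [local instance] Matrix.normedAddCommGroup Matrix.normedSpace in
theorem PosSemidef.norm_le_re_trace {A : Matrix k k ℂ} (hA : A.PosSemidef) :
    ‖A‖ ≤ A.trace.re :=
  (norm_le_iff (le_def.mp hA.trace_nonneg).1).mpr hA.norm_apply_le_re_trace

attribute [local instance] Matrix.normedAddCommGroup Matrix.normedSpace in
theorem isCompact_setOf_posSemidef_prod_re_trace_le (C : ℝ) :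
    IsCompact {p : Matrix k k ℂ × Matrix k k ℂ |
      p.1.PosSemidef ∧ p.2.PosSemidef ∧ p.1.trace.re + p.2.trace.re ≤ C} := by
  have hclosed : IsClosed {p : Matrix k k ℂ × Matrix k k ℂ |
      p.1.PosSemidef ∧ p.2.PosSemidef ∧ p.1.trace.re + p.2.trace.re ≤ C} :=
    (isClosed_setOf_posSemidef.preimage continuous_fst).inter
      ((isClosed_setOf_posSemidef.preimage continuous_snd).inter
        (isClosed_le ((continuous_re.comp continuous_fst.matrix_trace).add
          (continuous_re.comp continuous_snd.matrix_trace)) continuous_const))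
  refine ((isCompact_closedBall 0 C).prod (isCompact_closedBall 0 C)).of_isClosed_subset
    hclosed ?_
  rintro ⟨A, B⟩ ⟨hA, hB, hC : A.trace.re + B.trace.re ≤ C⟩
  have hA0 : 0 ≤ A.trace.re := (le_def.mp hA.trace_nonneg).1
  have hB0 : 0 ≤ B.trace.re := (le_def.mp hB.trace_nonneg).1
  simp only [Set.mem_prod, mem_closedBall_zero_iff]
  exact ⟨by linarith [hA.norm_le_re_trace], by linarith [hB.norm_le_re_trace]⟩

end Matrix

section PartialTranspose

variable {m n : ℕ}

theorem ptranspose_add (A B : Matrix (Fin m × Fin n) (Fin m × Fin n) ℂ) :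
    ptranspose (A + B) = ptranspose A + ptranspose B := rfl

theorem ptranspose_smul (c : ℝ) (A : Matrix (Fin m × Fin n) (Fin m × Fin n) ℂ) :
    ptranspose (c • A) = c • ptranspose A := rfl

theorem trace_ptranspose (A : Matrix (Fin m × Fin n) (Fin m × Fin n) ℂ) :
    (ptranspose A).trace = A.trace := rfl

theorem continuous_ptranspose : Continuous (ptranspose (m := m) (n := n)) :=
  continuous_matrix fun a b => continuous_id.matrix_elem (a.1, b.2) (b.1, a.2)

theorem Matrix.IsHermitian.ptranspose {A : Matrix (Fin m × Fin n) (Fin m × Fin n) ℂ}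
    (hA : A.IsHermitian) : (ptranspose A).IsHermitian :=
  funext₂ fun a b => hA.apply (a.1, b.2) (b.1, a.2)

end PartialTranspose

theorem isClosed_setOf_posSemidef_add_ptranspose (m n : ℕ) :
    IsClosed {Y : Matrix (Fin m × Fin n) (Fin m × Fin n) ℂ |
        ∃ Y₁ Y₂, Y₁.PosSemidef ∧ Y₂.PosSemidef ∧ Y = Y₁ + ptranspose Y₂} := by
  have himage : {Y : Matrix (Fin m × Fin n) (Fin m × Fin n) ℂ |
      ∃ Y₁ Y₂, Y₁.PosSemidef ∧ Y₂.PosSemidef ∧ Y = Y₁ + ptranspose Y₂} =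
      (fun p => p.1 + ptranspose p.2) ''
        {p : Matrix (Fin m × Fin n) (Fin m × Fin n) ℂ × Matrix (Fin m × Fin n) (Fin m × Fin n) ℂ |
          p.1.PosSemidef ∧ p.2.PosSemidef} := by
    ext Y
    simp [eq_comm, and_assoc]
  rw [himage]
  refine isClosed_image_of_isCompact_sublevel
    (continuous_fst.add (continuous_ptranspose.comp continuous_snd)).continuousOn
    (continuous_re.comp continuous_id.matrix_trace) fun C => ?_
  convert isCompact_setOf_posSemidef_prod_re_trace_le (k := Fin m × Fin n) C using 1
  ext p
  simp [trace_add, trace_ptranspose, and_assoc]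

theorem stmt_14 (m n : ℕ) :
    IsClosed {Y : Matrix (Fin m × Fin n) (Fin m × Fin n) ℂ |
        ∃ Y₁ Y₂, Y₁.PosSemidef ∧ Y₂.PosSemidef ∧ Y = Y₁ + ptranspose Y₂} ∧
    Convex ℝ {Y : Matrix (Fin m × Fin n) (Fin m × Fin n) ℂ |
        ∃ Y₁ Y₂, Y₁.PosSemidef ∧ Y₂.PosSemidef ∧ Y = Y₁ + ptranspose Y₂} ∧
    (∀ (c : ℝ), 0 ≤ c → ∀ Y ∈ {Y : Matrix (Fin m × Fin n) (Fin m × Fin n) ℂ |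
        ∃ Y₁ Y₂, Y₁.PosSemidef ∧ Y₂.PosSemidef ∧ Y = Y₁ + ptranspose Y₂},
      c • Y ∈ {Y : Matrix (Fin m × Fin n) (Fin m × Fin n) ℂ |
        ∃ Y₁ Y₂, Y₁.PosSemidef ∧ Y₂.PosSemidef ∧ Y = Y₁ + ptranspose Y₂}) ∧
    (∀ Y ∈ {Y : Matrix (Fin m × Fin n) (Fin m × Fin n) ℂ |
        ∃ Y₁ Y₂, Y₁.PosSemidef ∧ Y₂.PosSemidef ∧ Y = Y₁ + ptranspose Y₂},
      Y.IsHermitian) := by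
  refine ⟨isClosed_setOf_posSemidef_add_ptranspose m n, ?_, ?_, ?_⟩
  · rintro _ ⟨Y₁, Y₂, hY₁, hY₂, rfl⟩ _ ⟨Z₁, Z₂, hZ₁, hZ₂, rfl⟩ a b ha hb -
    refine ⟨a • Y₁ + b • Z₁, a • Y₂ + b • Z₂, (hY₁.smul ha).add (hZ₁.smul hb),
      (hY₂.smul ha).add (hZ₂.smul hb), ?_⟩
    rw [ptranspose_add, ptranspose_smul, ptranspose_smul, smul_add, smul_add]
    abel
  · rintro c hc _ ⟨Y₁, Y₂, hY₁, hY₂, rfl⟩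
    exact ⟨c • Y₁, c • Y₂, hY₁.smul hc, hY₂.smul hc, by rw [ptranspose_smul, smul_add]⟩
  · rintro _ ⟨Y₁, Y₂, hY₁, hY₂, rfl⟩
    exact hY₁.isHermitian.add hY₂.isHermitian.ptranspose
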